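/- arXiv:2109.03108 — 12 statements merged into one kernel-verified Lean document; each statement's English description precedes it below -/
import Mathlib

section
/- For the path P_n with n ≥ 3, the Sombor coindex equals [(n-4)(n-3)+1]√2 + 2(n-3)√5. -/
open Finset

open scoped Classical

variable {V : Type*}

/-- Degree of a vertex, as a real number. -/
noncomputable def deg [Fintype V] (G : SimpleGraph V) (v : V) : ℝ := G.degree v

/-- The Sombor index: sum over edges of √(d(u)²+d(v)²)
(each edge counted once, via ordered pairs halved). -/
noncomputable def SO [Fintype V] (G : SimpleGraph V) : ℝ :=
  (1/2) * ∑ u : V, ∑ v : V,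
    if G.Adj u v then Real.sqrt (deg G u ^ 2 + deg G v ^ 2) else 0

/-- The Sombor coindex: sum over unordered pairs of distinct non-adjacent
vertices of √(d(u)²+d(v)²), degrees taken in `G`. -/
noncomputable def SOc [Fintype V] (G : SimpleGraph V) : ℝ :=
  (1/2) * ∑ u : V, ∑ v : V,
    if u ≠ v ∧ ¬ G.Adj u v then Real.sqrt (deg G u ^ 2 + deg G v ^ 2) else 0

/-- First Zagreb coindex. -/
noncomputable def M1c [Fintype V] (G : SimpleGraph V) : ℝ :=
  (1/2) * ∑ u : V, ∑ v : V,
    if u ≠ v ∧ ¬ G.Adj u v then deg G u + deg G v else 0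

/-- Second Zagreb coindex. -/
noncomputable def M2c [Fintype V] (G : SimpleGraph V) : ℝ :=
  (1/2) * ∑ u : V, ∑ v : V,
    if u ≠ v ∧ ¬ G.Adj u v then deg G u * deg G v else 0

/-- Forgotten coindex. -/
noncomputable def Fc [Fintype V] (G : SimpleGraph V) : ℝ :=
  (1/2) * ∑ u : V, ∑ v : V,
    if u ≠ v ∧ ¬ G.Adj u v then deg G u ^ 2 + deg G v ^ 2 else 0

/-- Number of edges of the complement (number of non-adjacent pairs of
distinct vertices), as a real number. -/
noncomputable def mbar [Fintype V] (G : SimpleGraph V) : ℝ :=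
  (1/2) * ∑ u : V, ∑ v : V, if u ≠ v ∧ ¬ G.Adj u v then (1 : ℝ) else 0


/-! ### Auxiliary material for the path-graph Sombor coindex computation -/

noncomputable def c1 : ℝ := 3 * Real.sqrt 2 - 2 * Real.sqrt 5
noncomputable def c2 : ℝ := 3 * Real.sqrt 5 - 4 * Real.sqrt 2
noncomputable def c3 : ℝ := 6 * Real.sqrt 2 - 4 * Real.sqrt 5

noncomputable def dd (n i : ℕ) : ℝ := if i = 0 ∨ i = n - 1 then 1 else 2

noncomputable def Gf (n i j : ℕ) : ℝ :=
  c1 * dd n i * dd n j + c2 * (dd n i + dd n j) + c3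

lemma dd_one_or_two (n i : ℕ) : dd n i = 1 ∨ dd n i = 2 := by
  unfold dd; by_cases h : i = 0 ∨ i = n - 1 <;> simp [h]

lemma sqrt_poly {a b : ℝ} (ha : a = 1 ∨ a = 2) (hb : b = 1 ∨ b = 2) :
    Real.sqrt (a ^ 2 + b ^ 2) = c1 * a * b + c2 * (a + b) + c3 := by
  have h8 : Real.sqrt 8 = 2 * Real.sqrt 2 := by
    rw [show (8:ℝ) = 2 ^ 2 * 2 by norm_num, Real.sqrt_mul (by positivity),
      Real.sqrt_sq (by norm_num)]
  rcases ha with ha | ha <;> rcases hb with hb | hb <;> subst ha <;> subst hb <;>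
    unfold c1 c2 c3 <;> norm_num <;>
    [ring; ring; ring; (rw [h8]; ring)]

lemma deg_path {n : ℕ} (hn : 3 ≤ n) (v : Fin n) :
    deg (SimpleGraph.pathGraph n) v = dd n (v : ℕ) := by
  unfold dd
  have h1 : deg (SimpleGraph.pathGraph n) v
      = ∑ u : Fin n, if (SimpleGraph.pathGraph n).Adj v u then (1:ℝ) else 0 := by
    rw [deg, SimpleGraph.degree, SimpleGraph.neighborFinset_eq_filter, Finset.card_filter]
    push_cast; rfl
  rw [h1]
  have h2 : ∀ u : Fin n, (if (SimpleGraph.pathGraph n).Adj v u then (1:ℝ) else 0)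
      = (fun k : ℕ => (if (v:ℕ)+1 = k then (1:ℝ) else 0)
          + (if k+1 = (v:ℕ) then (1:ℝ) else 0)) (u : ℕ) := by
    intro u
    simp only [SimpleGraph.pathGraph_adj]
    by_cases ha : (v:ℕ)+1 = (u:ℕ) <;> by_cases hb : (u:ℕ)+1 = (v:ℕ) <;>
      simp [ha, hb] <;> omega
  rw [Finset.sum_congr rfl (fun u _ => h2 u),
    Fin.sum_univ_eq_sum_range
      (fun k => (if (v:ℕ)+1 = k then (1:ℝ) else 0) + (if k+1 = (v:ℕ) then (1:ℝ) else 0)),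
    Finset.sum_add_distrib, Finset.sum_ite_eq (Finset.range n) ((v:ℕ)+1) (fun _ => (1:ℝ))]
  have hS2 : (∑ k ∈ Finset.range n, if k+1 = (v:ℕ) then (1:ℝ) else 0)
      = if (v:ℕ) = 0 then 0 else 1 := by
    rcases Nat.eq_zero_or_eq_succ_pred (v:ℕ) with hv | hv
    · rw [hv]; simp
    · rw [if_neg (by omega)]
      have : ∀ k, (k+1 = (v:ℕ)) = (k = (v:ℕ)-1) := by intro k; simp; omega
      simp only [this]
      rw [Finset.sum_ite_eq' (Finset.range n) ((v:ℕ)-1) (fun _ => (1:ℝ)),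
        if_pos (by simp only [Finset.mem_range]; omega)]
  rw [hS2]
  have hv := v.isLt
  by_cases hv0 : (v:ℕ) = 0
  · rw [if_pos (by simp only [Finset.mem_range]; omega : (v:ℕ)+1 ∈ Finset.range n)]
    simp [hv0]
  · by_cases hvl : (v:ℕ) = n-1
    · rw [if_neg (by simp only [Finset.mem_range]; omega)]; simp [hv0, hvl]; omega
    · rw [if_pos (by simp only [Finset.mem_range]; omega)]; simp [hv0, hvl]; norm_num

lemma sum_dd {n : ℕ} (hn : 3 ≤ n) : ∑ i ∈ Finset.range n, dd n i = 2 * n - 2 := by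
  have h : ∀ i ∈ Finset.range n, dd n i
      = 2 - (if i = 0 then (1:ℝ) else 0) - (if i = n - 1 then (1:ℝ) else 0) := by
    intro i _
    have e1 : ((0:ℕ) = n - 1) = False := by simp; omega
    have e2 : ((n-1:ℕ) = 0) = False := by simp; omega
    unfold dd
    rcases eq_or_ne i 0 with h0 | h0 <;> rcases eq_or_ne i (n-1) with h1 | h1
    · exfalso; omega
    all_goals (simp [h0, h1, e1, e2]; try norm_num)
  rw [Finset.sum_congr rfl h]
  simp only [Finset.sum_sub_distrib, Finset.sum_const, Finset.card_range,
    Finset.sum_ite_eq' (Finset.range n) 0 (fun _ => (1:ℝ)),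
    Finset.sum_ite_eq' (Finset.range n) (n-1) (fun _ => (1:ℝ))]
  rw [if_pos (by simp only [Finset.mem_range]; omega),
    if_pos (by simp only [Finset.mem_range]; omega)]
  push_cast
  ring

lemma sum_dd_sq {n : ℕ} (hn : 3 ≤ n) :
    ∑ i ∈ Finset.range n, dd n i * dd n i = 4 * n - 6 := by
  have h : ∀ i ∈ Finset.range n, dd n i * dd n i
      = 4 - (if i = 0 then (3:ℝ) else 0) - (if i = n - 1 then (3:ℝ) else 0) := by
    intro i _
    have e1 : ((0:ℕ) = n - 1) = False := by simp; omega
    have e2 : ((n-1:ℕ) = 0) = False := by simp; omega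
    unfold dd
    rcases eq_or_ne i 0 with h0 | h0 <;> rcases eq_or_ne i (n-1) with h1 | h1
    · exfalso; omega
    all_goals (simp [h0, h1, e1, e2]; try norm_num)
  rw [Finset.sum_congr rfl h]
  simp only [Finset.sum_sub_distrib, Finset.sum_const, Finset.card_range,
    Finset.sum_ite_eq' (Finset.range n) 0 (fun _ => (3:ℝ)),
    Finset.sum_ite_eq' (Finset.range n) (n-1) (fun _ => (3:ℝ))]
  rw [if_pos (by simp only [Finset.mem_range]; omega),
    if_pos (by simp only [Finset.mem_range]; omega)]
  push_cast
  ring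

lemma sum_edge {n : ℕ} (hn : 3 ≤ n) :
    ∑ i ∈ Finset.range (n-1), Gf n i (i+1)
      = ((n:ℝ) - 1) * (4*c1 + 4*c2 + c3) - 2*(2*c1 + c2) := by
  have h : ∀ i ∈ Finset.range (n-1), Gf n i (i+1)
      = (4*c1 + 4*c2 + c3)
        - (if i = 0 then (2*c1 + c2 : ℝ) else 0)
        - (if i = n - 2 then (2*c1 + c2 : ℝ) else 0) := by
    intro i hi
    simp only [Finset.mem_range] at hi
    by_cases h0 : i = 0
    · subst h0
      have e1 : ¬((1:ℕ) = n - 1) := by omega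
      have e2 : ¬((0:ℕ) = n - 2) := by omega
      simp [Gf, dd, e1, e2]
      ring
    · by_cases h1 : i = n - 2
      · subst h1
        have e1 : ¬(n - 2 = 0) := by omega
        have e2 : ¬(n - 2 = n - 1) := by omega
        have e3 : n - 2 + 1 = n - 1 := by omega
        simp [Gf, dd, e1, e2, e3]
        ring
      · have e1 : ¬(i = n-1) := by omega
        have e2 : ¬(i+1 = 0) := by omega
        have e3 : ¬(i+1 = n-1) := by omega
        simp [Gf, dd, h0, h1, e1, e2, e3]
        ring
  rw [Finset.sum_congr rfl h]
  simp only [Finset.sum_sub_distrib, Finset.sum_const, Finset.card_range,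
    Finset.sum_ite_eq' (Finset.range (n-1)) 0 (fun _ => (2*c1 + c2:ℝ)),
    Finset.sum_ite_eq' (Finset.range (n-1)) (n-2) (fun _ => (2*c1 + c2:ℝ)), nsmul_eq_mul]
  rw [if_pos (by simp only [Finset.mem_range]; omega),
    if_pos (by simp only [Finset.mem_range]; omega)]
  rw [show ((n-1:ℕ):ℝ) = (n:ℝ) - 1 by push_cast [Nat.cast_sub (by omega : 1 ≤ n)]; ring]
  ring

lemma sum_lin (n : ℕ) (a b : ℝ) :
    ∑ i ∈ Finset.range n, (a * dd n i + b)
      = a * (∑ i ∈ Finset.range n, dd n i) + (n:ℝ) * b := by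
  rw [Finset.sum_add_distrib, ← Finset.mul_sum, Finset.sum_const, Finset.card_range,
    nsmul_eq_mul]

lemma sum_sum_Gf (n : ℕ) :
    ∑ i ∈ Finset.range n, ∑ j ∈ Finset.range n, Gf n i j
      = c1 * (∑ i ∈ Finset.range n, dd n i)^2
        + 2*c2*(n:ℝ)*(∑ i ∈ Finset.range n, dd n i) + c3*(n:ℝ)^2 := by
  set S := ∑ i ∈ Finset.range n, dd n i with hS
  have h : ∀ i ∈ Finset.range n, ∑ j ∈ Finset.range n, Gf n i j
      = (c1 * S + c2 * n) * dd n i + (c2 * S + c3 * n) := by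
    intro i _
    have h2 : ∀ j ∈ Finset.range n, Gf n i j
        = (c1 * dd n i + c2) * dd n j + (c2 * dd n i + c3) := by
      intro j _; unfold Gf; ring
    rw [Finset.sum_congr rfl h2, sum_lin]
    ring
  rw [Finset.sum_congr rfl h, sum_lin]
  ring

lemma sum_diag_Gf (n : ℕ) :
    ∑ i ∈ Finset.range n, Gf n i i
      = c1 * (∑ i ∈ Finset.range n, dd n i * dd n i)
        + 2*c2*(∑ i ∈ Finset.range n, dd n i) + c3*(n:ℝ) := by
  have h : ∀ i ∈ Finset.range n, Gf n i i
      = c1 * (dd n i * dd n i) + (2*c2) * dd n i + c3 := by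
    intro i _; unfold Gf; ring
  rw [Finset.sum_congr rfl h, Finset.sum_add_distrib, Finset.sum_add_distrib,
    ← Finset.mul_sum, ← Finset.mul_sum, Finset.sum_const, Finset.card_range, nsmul_eq_mul]
  ring


theorem somborCoindex_pathGraph (n : ℕ) (hn : 3 ≤ n) :
    SOc (SimpleGraph.pathGraph n) =
      (((n : ℝ) - 4) * ((n : ℝ) - 3) + 1) * Real.sqrt 2
        + 2 * ((n : ℝ) - 3) * Real.sqrt 5 := by
  classical
  set G := SimpleGraph.pathGraph n with hG
  have hdeg : ∀ v : Fin n, deg G v = dd n (v : ℕ) := fun v => deg_path hn v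
  -- the pointwise function on natural indices
  set F : ℕ → ℕ → ℝ :=
    fun i j => if i ≠ j ∧ ¬(i+1 = j ∨ j+1 = i) then Gf n i j else 0 with hF
  have step2 : SOc G = (1/2) * ∑ i ∈ Finset.range n, ∑ j ∈ Finset.range n, F i j := by
    rw [SOc]
    congr 1
    rw [← Fin.sum_univ_eq_sum_range (fun i => ∑ j ∈ Finset.range n, F i j) n]
    refine Finset.sum_congr rfl fun u _ => ?_
    rw [← Fin.sum_univ_eq_sum_range (F (u:ℕ)) n]
    refine Finset.sum_congr rfl fun v _ => ?_
    have hadj : G.Adj u v ↔ ((u:ℕ)+1 = (v:ℕ) ∨ (v:ℕ)+1 = (u:ℕ)) :=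
      SimpleGraph.pathGraph_adj
    have hne : (u ≠ v) ↔ ((u:ℕ) ≠ (v:ℕ)) := by
      constructor
      · intro h h'; exact h (Fin.ext h')
      · intro h h'; exact h (congrArg Fin.val h')
    simp only [hF]
    by_cases h : u ≠ v ∧ ¬ G.Adj u v
    · rw [if_pos h, if_pos ⟨hne.mp h.1, fun hc => h.2 (hadj.mpr hc)⟩, hdeg u, hdeg v,
        sqrt_poly (dd_one_or_two n u) (dd_one_or_two n v)]
      rfl
    · rw [if_neg h, if_neg (fun hc => h ⟨hne.mpr hc.1, fun ha => hc.2 (hadj.mp ha)⟩)]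
  -- pointwise inclusion–exclusion decomposition
  have dec : ∀ i j : ℕ, F i j = Gf n i j - (if i = j then Gf n i j else 0)
      - (if j = i+1 then Gf n i j else 0) - (if i = j+1 then Gf n i j else 0) := by
    intro i j
    simp only [hF]
    split_ifs <;> first | ring1 | (exfalso; omega)
  obtain ⟨m, hm⟩ : ∃ m, n = m + 1 := ⟨n - 1, by omega⟩
  have hmn : m = n - 1 := by omega
  -- the three correction sums
  have diag : ∀ i ∈ Finset.range n,
      (∑ j ∈ Finset.range n, if i = j then Gf n i j else 0) = Gf n i i := by
    intro i hi
    rw [Finset.sum_ite_eq (Finset.range n) i (fun j => Gf n i j), if_pos hi]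
  have adj1 : ∀ i ∈ Finset.range n,
      (∑ j ∈ Finset.range n, if j = i+1 then Gf n i j else 0)
        = if i+1 ∈ Finset.range n then Gf n i (i+1) else 0 := by
    intro i _
    rw [Finset.sum_ite_eq' (Finset.range n) (i+1) (fun j => Gf n i j)]
  have adj1' : (∑ i ∈ Finset.range n, if i+1 ∈ Finset.range n then Gf n i (i+1) else 0)
      = ∑ i ∈ Finset.range (n-1), Gf n i (i+1) := by
    rw [hm, Finset.sum_range_succ, if_neg (by simp)]
    rw [show m + 1 - 1 = m from rfl, add_zero]
    refine Finset.sum_congr rfl fun i hi => ?_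
    rw [if_pos]
    simp only [Finset.mem_range] at hi ⊢
    omega
  have adj2 : (∑ i ∈ Finset.range n, ∑ j ∈ Finset.range n, if i = j+1 then Gf n i j else 0)
      = ∑ i ∈ Finset.range (n-1), Gf n i (i+1) := by
    rw [Finset.sum_comm]
    have h : ∀ j ∈ Finset.range n,
        (∑ i ∈ Finset.range n, if i = j+1 then Gf n i j else 0)
          = if j+1 ∈ Finset.range n then Gf n (j+1) j else 0 := by
      intro j _
      rw [Finset.sum_ite_eq' (Finset.range n) (j+1) (fun i => Gf n i j)]
    rw [Finset.sum_congr rfl h, hm, Finset.sum_range_succ, if_neg (by simp)]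
    rw [show m + 1 - 1 = m from rfl, add_zero]
    refine Finset.sum_congr rfl fun i hi => ?_
    rw [if_pos]
    · unfold Gf; ring
    · simp only [Finset.mem_range] at hi ⊢
      omega
  -- assemble
  have main : (∑ i ∈ Finset.range n, ∑ j ∈ Finset.range n, F i j)
      = (∑ i ∈ Finset.range n, ∑ j ∈ Finset.range n, Gf n i j)
        - (∑ i ∈ Finset.range n, Gf n i i)
        - (∑ i ∈ Finset.range (n-1), Gf n i (i+1))
        - (∑ i ∈ Finset.range (n-1), Gf n i (i+1)) := by
    have h : ∀ i ∈ Finset.range n, (∑ j ∈ Finset.range n, F i j)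
        = (∑ j ∈ Finset.range n, Gf n i j) - Gf n i i
          - (if i+1 ∈ Finset.range n then Gf n i (i+1) else 0)
          - (∑ j ∈ Finset.range n, if i = j+1 then Gf n i j else 0) := by
      intro i hi
      rw [Finset.sum_congr rfl (fun j _ => dec i j)]
      rw [Finset.sum_sub_distrib, Finset.sum_sub_distrib, Finset.sum_sub_distrib,
        diag i hi, adj1 i hi]
    rw [Finset.sum_congr rfl h, Finset.sum_sub_distrib, Finset.sum_sub_distrib,
      Finset.sum_sub_distrib, adj1', adj2]
  -- final computation
  rw [step2, main, sum_sum_Gf n, sum_diag_Gf n, sum_dd hn, sum_dd_sq hn, sum_edge hn]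
  unfold c1 c2 c3
  ring
end

section
/- Let G be a graph on n vertices with maximum degree Δ and minimum degree δ. Then (δn/√2)(n-1-Δ) ≤ SO̅(G) ≤ (Δn/√2)(n-1-δ), with equality in both bounds if G is regular. -/
open Finset

open scoped Classical

variable {V : Type*}

theorem somborCoindex_bounds [Fintype V] (G : SimpleGraph V) (Δ δ : ℕ)
    (hΔ : ∀ v, G.degree v ≤ Δ) (hΔa : ∃ v, G.degree v = Δ)
    (hδ : ∀ v, δ ≤ G.degree v) (hδa : ∃ v, G.degree v = δ) :
    ((δ : ℝ) * Fintype.card V / Real.sqrt 2) * ((Fintype.card V : ℝ) - 1 - Δ) ≤ SOc G ∧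
    SOc G ≤ ((Δ : ℝ) * Fintype.card V / Real.sqrt 2) * ((Fintype.card V : ℝ) - 1 - δ) ∧
    ((∃ r, G.IsRegularOfDegree r) →
      ((δ : ℝ) * Fintype.card V / Real.sqrt 2) * ((Fintype.card V : ℝ) - 1 - Δ) = SOc G ∧
      SOc G = ((Δ : ℝ) * Fintype.card V / Real.sqrt 2) * ((Fintype.card V : ℝ) - 1 - δ)) := by
  classical
  set n : ℝ := (Fintype.card V : ℝ) with hn
  set c : ℝ := Real.sqrt 2 with hc
  have hc2 : c * c = 2 := Real.mul_self_sqrt (by norm_num)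
  have hcpos : 0 < c := Real.sqrt_pos.mpr (by norm_num)
  have hV : Nonempty V := ⟨hΔa.choose⟩
  -- Δ ≤ n - 1
  have hΔn : (Δ : ℝ) ≤ n - 1 := by
    obtain ⟨v, hv⟩ := hΔa
    have := G.degree_lt_card_verts v
    rw [hv] at this
    have : Δ + 1 ≤ Fintype.card V := this
    have := (Nat.cast_le (α := ℝ)).mpr this
    push_cast at this
    linarith
  have hδn : (δ : ℝ) ≤ n - 1 := by
    obtain ⟨v, hv⟩ := hδa
    have h2 := hΔ v
    rw [hv] at h2
    have := (Nat.cast_le (α := ℝ)).mpr h2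
    linarith
  -- inner count
  have hcount : ∀ u : V, (∑ v : V, if u ≠ v ∧ ¬ G.Adj u v then (1:ℝ) else 0)
      = n - 1 - deg G u := by
    intro u
    have h1 : (∑ v : V, if u ≠ v ∧ ¬ G.Adj u v then (1:ℝ) else 0)
        = ((univ.filter (fun v => u ≠ v ∧ ¬ G.Adj u v)).card : ℝ) := by
      rw [Finset.sum_boole]
    have hsplit := Finset.card_filter_add_card_filter_not
      (s := (univ : Finset V)) (p := fun v => u ≠ v ∧ ¬ G.Adj u v)
    have hneg : (univ.filter (fun v => ¬(u ≠ v ∧ ¬ G.Adj u v)))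
        = insert u (G.neighborFinset u) := by
      ext v
      simp only [Finset.mem_filter, Finset.mem_univ, true_and, Finset.mem_insert,
        SimpleGraph.mem_neighborFinset, not_and_or, not_not, ne_eq]
      constructor
      · rintro (h | h)
        · exact Or.inl h.symm
        · exact Or.inr h
      · rintro (h | h)
        · exact Or.inl h.symm
        · exact Or.inr h
    have hucard : (insert u (G.neighborFinset u)).card = G.degree u + 1 := by
      rw [Finset.card_insert_of_notMem (by simp)]
      simp [SimpleGraph.card_neighborFinset_eq_degree]
    rw [hneg, hucard] at hsplit
    rw [Finset.card_univ] at hsplit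
    have : ((univ.filter (fun v => u ≠ v ∧ ¬ G.Adj u v)).card : ℝ)
        + (G.degree u + 1 : ℕ) = (Fintype.card V : ℝ) := by
      exact_mod_cast congrArg (Nat.cast : ℕ → ℝ) hsplit
    rw [h1]
    push_cast at this
    simp only [deg]
    linarith
  -- pointwise bounds on the sqrt term
  have hlowterm : ∀ u v : V, (δ : ℝ) * c ≤ Real.sqrt (deg G u ^ 2 + deg G v ^ 2) := by
    intro u v
    have hdu : (δ : ℝ) ≤ deg G u := by unfold deg; exact_mod_cast hδ u
    have hdv : (δ : ℝ) ≤ deg G v := by unfold deg; exact_mod_cast hδ v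
    have hδ0 : (0:ℝ) ≤ (δ:ℝ) := Nat.cast_nonneg _
    rw [show ((δ:ℝ) * c) = Real.sqrt ((δ:ℝ)^2 * 2) by
      rw [Real.sqrt_mul (sq_nonneg _), Real.sqrt_sq hδ0]]
    apply Real.sqrt_le_sqrt
    nlinarith
  have hupterm : ∀ u v : V, Real.sqrt (deg G u ^ 2 + deg G v ^ 2) ≤ (Δ : ℝ) * c := by
    intro u v
    have hdu : deg G u ≤ (Δ : ℝ) := by unfold deg; exact_mod_cast hΔ u
    have hdv : deg G v ≤ (Δ : ℝ) := by unfold deg; exact_mod_cast hΔ v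
    have hdu0 : (0:ℝ) ≤ deg G u := Nat.cast_nonneg _
    have hdv0 : (0:ℝ) ≤ deg G v := Nat.cast_nonneg _
    rw [show ((Δ:ℝ) * c) = Real.sqrt ((Δ:ℝ)^2 * 2) by
      rw [Real.sqrt_mul (sq_nonneg _), Real.sqrt_sq (Nat.cast_nonneg _)]]
    apply Real.sqrt_le_sqrt
    nlinarith
  -- the double-sum N of the indicator
  set N : ℝ := ∑ u : V, ∑ v : V, (if u ≠ v ∧ ¬ G.Adj u v then (1:ℝ) else 0) with hN
  have hNval : N = ∑ u : V, (n - 1 - deg G u) := by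
    rw [hN]; exact Finset.sum_congr rfl fun u _ => hcount u
  have hNlow : n * (n - 1 - (Δ:ℝ)) ≤ N := by
    rw [hNval]
    calc n * (n - 1 - (Δ:ℝ)) = ∑ _u : V, (n - 1 - (Δ:ℝ)) := by
          rw [Finset.sum_const, Finset.card_univ]; ring
      _ ≤ ∑ u : V, (n - 1 - deg G u) := by
          apply Finset.sum_le_sum
          intro u _
          have : deg G u ≤ (Δ:ℝ) := by unfold deg; exact_mod_cast hΔ u
          linarith
  have hNup : N ≤ n * (n - 1 - (δ:ℝ)) := by
    rw [hNval]
    calc ∑ u : V, (n - 1 - deg G u) ≤ ∑ _u : V, (n - 1 - (δ:ℝ)) := by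
          apply Finset.sum_le_sum
          intro u _
          have : (δ:ℝ) ≤ deg G u := by unfold deg; exact_mod_cast hδ u
          linarith
      _ = n * (n - 1 - (δ:ℝ)) := by
          rw [Finset.sum_const, Finset.card_univ]; ring
  -- sum comparisons
  set S : ℝ := ∑ u : V, ∑ v : V,
    (if u ≠ v ∧ ¬ G.Adj u v then Real.sqrt (deg G u ^ 2 + deg G v ^ 2) else 0) with hS
  have hSOc : SOc G = (1/2) * S := rfl
  have hSlow : (δ:ℝ) * c * N ≤ S := by
    rw [hN, Finset.mul_sum, hS]
    apply Finset.sum_le_sum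
    intro u _
    rw [Finset.mul_sum]
    apply Finset.sum_le_sum
    intro v _
    split_ifs with h
    · simpa using hlowterm u v
    · simp
  have hSup : S ≤ (Δ:ℝ) * c * N := by
    rw [hN, Finset.mul_sum, hS]
    apply Finset.sum_le_sum
    intro u _
    rw [Finset.mul_sum]
    apply Finset.sum_le_sum
    intro v _
    split_ifs with h
    · simpa using hupterm u v
    · simp
  have hδc : (0:ℝ) ≤ (δ:ℝ) * c := mul_nonneg (Nat.cast_nonneg _) hcpos.le
  have hΔc : (0:ℝ) ≤ (Δ:ℝ) * c := mul_nonneg (Nat.cast_nonneg _) hcpos.le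
  -- algebraic identities
  have hidlow : (δ : ℝ) * n / c * (n - 1 - Δ) = (1/2) * ((δ:ℝ) * c * (n * (n - 1 - (Δ:ℝ)))) := by
    field_simp
    linear_combination (-((δ:ℝ) * n * (n - 1 - (Δ:ℝ)))) * hc2
  have hidup : (Δ : ℝ) * n / c * (n - 1 - δ) = (1/2) * ((Δ:ℝ) * c * (n * (n - 1 - (δ:ℝ)))) := by
    field_simp
    linear_combination (-((Δ:ℝ) * n * (n - 1 - (δ:ℝ)))) * hc2
  have hlowbound : (δ : ℝ) * n / c * (n - 1 - Δ) ≤ SOc G := by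
    rw [hSOc, hidlow]
    have h1 : (δ:ℝ) * c * (n * (n - 1 - (Δ:ℝ))) ≤ (δ:ℝ) * c * N :=
      mul_le_mul_of_nonneg_left hNlow hδc
    linarith
  have hupbound : SOc G ≤ (Δ : ℝ) * n / c * (n - 1 - δ) := by
    rw [hSOc, hidup]
    have h1 : (Δ:ℝ) * c * N ≤ (Δ:ℝ) * c * (n * (n - 1 - (δ:ℝ))) :=
      mul_le_mul_of_nonneg_left hNup hΔc
    linarith
  refine ⟨hlowbound, hupbound, ?_⟩
  rintro ⟨r, hr⟩
  have hΔr : Δ = r := by obtain ⟨v, hv⟩ := hΔa; rw [← hv, hr v]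
  have hδr : δ = r := by obtain ⟨v, hv⟩ := hδa; rw [← hv, hr v]
  have heq : (δ : ℝ) * n / c * (n - 1 - Δ) = (Δ : ℝ) * n / c * (n - 1 - δ) := by
    rw [hΔr, hδr]
  constructor
  · exact le_antisymm hlowbound (heq ▸ hupbound)
  · exact le_antisymm hupbound (heq ▸ hlowbound)
end

section
/- For any graph G with minimum degree δ, SO̅(G) ≤ M̅₁(G) − (2−√2)·δ·m̅, where m̅ is the number of edges of the complement of G. Equality holds if G is regular. -/
open Finset

open scoped Classical

variable {V : Type*}

lemma sqrt_key {d a b : ℝ} (hd : 0 ≤ d) (ha : d ≤ a) (hb : d ≤ b) :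
    Real.sqrt (a ^ 2 + b ^ 2) ≤ a + b - (2 - Real.sqrt 2) * d := by
  have hs : Real.sqrt 2 ^ 2 = 2 := Real.sq_sqrt (by norm_num)
  have hs1 : (1 : ℝ) ≤ Real.sqrt 2 := by
    nlinarith [Real.sqrt_nonneg 2]
  have hs2 : Real.sqrt 2 ≤ 2 := by
    nlinarith [Real.sqrt_nonneg 2]
  have hrhs : 0 ≤ a + b - (2 - Real.sqrt 2) * d := by nlinarith
  have h2 : a ^ 2 + b ^ 2 ≤ (a + b - (2 - Real.sqrt 2) * d) ^ 2 := by
    nlinarith [mul_nonneg (mul_nonneg (sub_nonneg.2 hs1) hd) (sub_nonneg.2 ha),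
      mul_nonneg (mul_nonneg (sub_nonneg.2 hs1) hd) (sub_nonneg.2 hb),
      mul_nonneg (sub_nonneg.2 ha) (sub_nonneg.2 hb), hs, sq_nonneg d]
  calc Real.sqrt (a ^ 2 + b ^ 2) ≤ Real.sqrt ((a + b - (2 - Real.sqrt 2) * d) ^ 2) :=
        Real.sqrt_le_sqrt h2
    _ = a + b - (2 - Real.sqrt 2) * d := Real.sqrt_sq hrhs

theorem somborCoindex_le_zagrebCoindex [Fintype V] (G : SimpleGraph V) (δ : ℕ)
    (hδ : ∀ v, δ ≤ G.degree v) (hδa : ∃ v, G.degree v = δ) :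
    SOc G ≤ M1c G - (2 - Real.sqrt 2) * δ * mbar G ∧
    ((∃ r, G.IsRegularOfDegree r) →
      SOc G = M1c G - (2 - Real.sqrt 2) * δ * mbar G) := by
  have hd0 : (0 : ℝ) ≤ (δ : ℝ) := Nat.cast_nonneg δ
  have hdeg : ∀ v, (δ : ℝ) ≤ deg G v := by
    intro v
    unfold deg
    exact_mod_cast hδ v
  constructor
  · have key : ∀ u v : V,
        (if u ≠ v ∧ ¬ G.Adj u v then Real.sqrt (deg G u ^ 2 + deg G v ^ 2) else 0) ≤
        (if u ≠ v ∧ ¬ G.Adj u v then deg G u + deg G v else 0) -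
          (2 - Real.sqrt 2) * (δ : ℝ) * (if u ≠ v ∧ ¬ G.Adj u v then (1 : ℝ) else 0) := by
      intro u v
      split
      · rw [mul_one]
        exact sqrt_key hd0 (hdeg u) (hdeg v)
      · simp
    have hsum : (∑ u : V, ∑ v : V,
        (if u ≠ v ∧ ¬ G.Adj u v then Real.sqrt (deg G u ^ 2 + deg G v ^ 2) else 0)) ≤
        ∑ u : V, ∑ v : V,
        ((if u ≠ v ∧ ¬ G.Adj u v then deg G u + deg G v else 0) -
          (2 - Real.sqrt 2) * (δ : ℝ) * (if u ≠ v ∧ ¬ G.Adj u v then (1 : ℝ) else 0)) :=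
      Finset.sum_le_sum fun u _ => Finset.sum_le_sum fun v _ => key u v
    simp only [Finset.sum_sub_distrib, ← Finset.mul_sum] at hsum
    unfold SOc M1c mbar
    linarith
  · rintro ⟨r, hr⟩
    obtain ⟨w, hw⟩ := hδa
    have hrδ : r = δ := by rw [← hw, hr w]
    subst hrδ
    have hdv : ∀ v, deg G v = (r : ℝ) := by
      intro v; unfold deg; exact_mod_cast congrArg Nat.cast (hr v)
    have key : ∀ u v : V,
        (if u ≠ v ∧ ¬ G.Adj u v then Real.sqrt (deg G u ^ 2 + deg G v ^ 2) else 0) =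
        (if u ≠ v ∧ ¬ G.Adj u v then deg G u + deg G v else 0) -
          (2 - Real.sqrt 2) * (r : ℝ) * (if u ≠ v ∧ ¬ G.Adj u v then (1 : ℝ) else 0) := by
      intro u v
      split
      · rw [hdv u, hdv v, mul_one,
          show (r : ℝ) ^ 2 + (r : ℝ) ^ 2 = 2 * (r : ℝ) ^ 2 by ring,
          Real.sqrt_mul (by norm_num), Real.sqrt_sq hd0]
        ring
      · simp
    have hsum : (∑ u : V, ∑ v : V,
        (if u ≠ v ∧ ¬ G.Adj u v then Real.sqrt (deg G u ^ 2 + deg G v ^ 2) else 0)) =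
        ∑ u : V, ∑ v : V,
        ((if u ≠ v ∧ ¬ G.Adj u v then deg G u + deg G v else 0) -
          (2 - Real.sqrt 2) * (r : ℝ) * (if u ≠ v ∧ ¬ G.Adj u v then (1 : ℝ) else 0)) :=
      Finset.sum_congr rfl fun u _ => Finset.sum_congr rfl fun v _ => key u v
    simp only [Finset.sum_sub_distrib, ← Finset.mul_sum] at hsum
    unfold SOc M1c mbar
    linarith
end

section
/- For any graph G, the first Zagreb coindex satisfies M̅₁(G) = 2m(n−1) − M₁(G), where n is the number of vertices and m the number of edges of G. -/
open Finset

open scoped Classical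

variable {V : Type*}

/-! Each vertex `u` contributes `d(u)` to `M̅₁(G)` once for each of its `n - 1 - d(u)`
non-neighbours, i.e. once per edge at `u` of the complement `Gᶜ`. Hence
`M̅₁(G) = Σ_u (n - 1 - d(u)) d(u)`, and `Σ_u d(u) = 2m` finishes. -/

namespace SimpleGraph

variable {R : Type*} [Fintype V] (G : SimpleGraph V) [DecidableRel G.Adj]

theorem degree_add_degree_compl_add_one (v : V) [Fintype (Gᶜ.neighborSet v)] :
    G.degree v + Gᶜ.degree v + 1 = Fintype.card V := by
  have := G.degree_lt_card_verts v
  rw [degree_compl]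
  omega

theorem sum_sum_ite_adj_left [AddCommMonoid R] (f : V → R) :
    ∑ u, ∑ v, (if G.Adj u v then f u else 0) = ∑ u, G.degree u • f u := by
  simp only [← Finset.sum_filter, Finset.sum_const, ← neighborFinset_eq_filter,
    card_neighborFinset_eq_degree]

theorem sum_sum_ite_adj_add [AddCommMonoid R] (f : V → R) :
    ∑ u, ∑ v, (if G.Adj u v then f u + f v else 0) = 2 • ∑ u, G.degree u • f u := by
  have hsymm : ∑ u, ∑ v, (if G.Adj u v then f v else 0) =
      ∑ u, ∑ v, (if G.Adj u v then f u else 0) := by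
    rw [Finset.sum_comm]
    simp only [G.adj_comm]
  simp only [ite_add_zero, Finset.sum_add_distrib, hsymm, sum_sum_ite_adj_left, two_nsmul]

end SimpleGraph

open SimpleGraph

theorem M1c_eq_sum_degree_compl_mul_deg [Fintype V] (G : SimpleGraph V) :
    M1c G = ∑ u, (Gᶜ.degree u : ℝ) * deg G u := by
  simp only [M1c, ← compl_adj, sum_sum_ite_adj_add, nsmul_eq_mul]
  push_cast
  ring

theorem zagrebCoindex_eq [Fintype V] (G : SimpleGraph V) :
    M1c G = 2 * G.edgeFinset.card * ((Fintype.card V : ℝ) - 1) - ∑ v : V, deg G v ^ 2 := by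
  have hcompl (v : V) : (Gᶜ.degree v : ℝ) = Fintype.card V - 1 - deg G v := by
    rw [deg, ← G.degree_add_degree_compl_add_one v]
    push_cast
    ring
  have hsum : ∑ v, deg G v = 2 * G.edgeFinset.card := by
    simp only [deg]
    exact_mod_cast G.sum_degrees_eq_twice_card_edges
  calc M1c G = ∑ u, ((Fintype.card V - 1) * deg G u - deg G u ^ 2) := by
        rw [M1c_eq_sum_degree_compl_mul_deg]
        exact Finset.sum_congr rfl fun u _ => by rw [hcompl]; ring
    _ = _ := by
        rw [Finset.sum_sub_distrib, ← Finset.mul_sum, hsum]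
        ring
end

section
/- Let G be a graph on n vertices with n ≥ 1, maximum degree Δ. Then SO(G) + SO̅(G) ≤ n(n−1)Δ/√2, with equality if G is regular. -/
open Finset

open scoped Classical

variable {V : Type*}

theorem sombor_add_coindex_le [Fintype V] (G : SimpleGraph V) (Δ : ℕ)
    (hn : 1 ≤ Fintype.card V)
    (hΔ : ∀ v, G.degree v ≤ Δ) (hΔa : ∃ v, G.degree v = Δ) :
    SO G + SOc G ≤ (Fintype.card V : ℝ) * ((Fintype.card V : ℝ) - 1) * Δ / Real.sqrt 2 ∧
    ((∃ r, G.IsRegularOfDegree r) →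
      SO G + SOc G = (Fintype.card V : ℝ) * ((Fintype.card V : ℝ) - 1) * Δ / Real.sqrt 2) := by

  classical
  set n : ℝ := (Fintype.card V : ℝ) with hn'
  have hdeg0 : ∀ v, 0 ≤ deg G v := fun v => by unfold deg; positivity
  have hdegΔ : ∀ v, deg G v ≤ (Δ : ℝ) := fun v => by
    unfold deg; exact_mod_cast hΔ v
  have hcombine : SO G + SOc G = (1/2) * ∑ u : V, ∑ v : V,
      if u ≠ v then Real.sqrt (deg G u ^ 2 + deg G v ^ 2) else 0 := by
    unfold SO SOc
    rw [← mul_add, ← Finset.sum_add_distrib]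
    congr 1
    refine Finset.sum_congr rfl fun u _ => ?_
    rw [← Finset.sum_add_distrib]
    refine Finset.sum_congr rfl fun v _ => ?_
    by_cases h : G.Adj u v
    · simp [h, G.ne_of_adj h]
    · by_cases h2 : u = v <;> simp [h, h2]
  have hcount : ∀ c : ℝ, (∑ u : V, ∑ v : V, if u ≠ v then c else 0)
      = n * (n - 1) * c := by
    intro c
    have inner : ∀ u : V, (∑ v : V, if u ≠ v then c else 0) = (n - 1) * c := by
      intro u
      have h1 : (∑ v : V, if u ≠ v then c else 0)
          = (∑ v : V, c) - (∑ v : V, if u = v then c else 0) := by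
        rw [← Finset.sum_sub_distrib]
        refine Finset.sum_congr rfl fun v _ => ?_
        by_cases h : u = v <;> simp [h]
      rw [h1, Finset.sum_const, Finset.sum_ite_eq]
      simp [hn', sub_mul]
    simp only [inner, Finset.sum_const, nsmul_eq_mul]
    rw [Finset.card_univ, ← hn']; ring
  have hsqrt2pos : (0:ℝ) < Real.sqrt 2 := by positivity
  have h2 : Real.sqrt 2 * Real.sqrt 2 = 2 := Real.mul_self_sqrt (by norm_num)
  have hterm : ∀ u v : V, Real.sqrt (deg G u ^ 2 + deg G v ^ 2)
      ≤ Real.sqrt 2 * Δ := by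
    intro u v
    have hle : deg G u ^ 2 + deg G v ^ 2 ≤ 2 * (Δ:ℝ) ^ 2 := by
      nlinarith [hdeg0 u, hdeg0 v, hdegΔ u, hdegΔ v]
    calc Real.sqrt (deg G u ^ 2 + deg G v ^ 2) ≤ Real.sqrt (2 * (Δ:ℝ)^2) :=
          Real.sqrt_le_sqrt hle
      _ = Real.sqrt 2 * Δ := by
          rw [Real.sqrt_mul (by norm_num), Real.sqrt_sq (Nat.cast_nonneg _)]
  have hrhs : (1/2) * (n * (n - 1) * (Real.sqrt 2 * Δ)) = n * (n - 1) * Δ / Real.sqrt 2 := by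
    rw [eq_div_iff (ne_of_gt hsqrt2pos)]
    linear_combination (n * (n - 1) * (Δ:ℝ) / 2) * h2
  constructor
  · rw [hcombine, ← hrhs, ← hcount (Real.sqrt 2 * Δ)]
    have : (∑ u : V, ∑ v : V, if u ≠ v then Real.sqrt (deg G u ^ 2 + deg G v ^ 2) else 0)
        ≤ ∑ u : V, ∑ v : V, if u ≠ v then Real.sqrt 2 * Δ else 0 := by
      refine Finset.sum_le_sum fun u _ => Finset.sum_le_sum fun v _ => ?_
      by_cases h : u = v <;> simp [h, hterm u v]
    linarith
  · rintro ⟨r, hr⟩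
    obtain ⟨w, hw⟩ := hΔa
    have hrΔ : r = Δ := by rw [← hw]; exact (hr w).symm
    have hdegall : ∀ u, deg G u = (Δ : ℝ) := by
      intro u; unfold deg; rw [hr u, hrΔ]
    rw [hcombine, ← hrhs, ← hcount (Real.sqrt 2 * Δ)]
    congr 1
    refine Finset.sum_congr rfl fun u _ => Finset.sum_congr rfl fun v _ => ?_
    by_cases h : u = v <;> simp only [h, if_pos, if_neg, ne_eq, not_true_eq_false, if_false,
      not_false_eq_true, if_true]
    rw [hdegall u, hdegall v]
    rw [show (Δ:ℝ)^2 + (Δ:ℝ)^2 = 2 * (Δ:ℝ)^2 by ring,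
      Real.sqrt_mul (by norm_num), Real.sqrt_sq (Nat.cast_nonneg _)]
end

section
/- Let G be a graph on n vertices with maximum degree Δ and minimum degree δ, and let m̅ be the number of edges of the complement Ḡ. Then SO(Ḡ) + SO̅(G) ≤ m̅·(n−1+Δ−δ)·√2, with equality if G is regular. -/
open Finset

open scoped Classical

variable {V : Type*}

lemma sqrt_sq_add_sq_le {a b c : ℝ} (ha : 0 ≤ a) (hb : 0 ≤ b)
    (hac : a ≤ c) (hbc : b ≤ c) :
    Real.sqrt (a ^ 2 + b ^ 2) ≤ c * Real.sqrt 2 := by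
  have hc : (0:ℝ) ≤ c := le_trans ha hac
  have h2 : c * Real.sqrt 2 = Real.sqrt (2 * c ^ 2) := by
    rw [Real.sqrt_mul (by norm_num), Real.sqrt_sq hc]; ring
  rw [h2]
  exact Real.sqrt_le_sqrt (by nlinarith)

lemma sqrt_sq_add_sq_self {a : ℝ} (ha : 0 ≤ a) :
    Real.sqrt (a ^ 2 + a ^ 2) = a * Real.sqrt 2 := by
  have : a ^ 2 + a ^ 2 = 2 * a ^ 2 := by ring
  rw [this, Real.sqrt_mul (by norm_num), Real.sqrt_sq ha]; ring

theorem sombor_compl_add_coindex_le [Fintype V] (G : SimpleGraph V) (Δ δ : ℕ)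
    (hΔ : ∀ v, G.degree v ≤ Δ) (hΔa : ∃ v, G.degree v = Δ)
    (hδ : ∀ v, δ ≤ G.degree v) (hδa : ∃ v, G.degree v = δ) :
    SO Gᶜ + SOc G ≤ mbar G * ((Fintype.card V : ℝ) - 1 + Δ - δ) * Real.sqrt 2 ∧
    ((∃ r, G.IsRegularOfDegree r) →
      SO Gᶜ + SOc G = mbar G * ((Fintype.card V : ℝ) - 1 + Δ - δ) * Real.sqrt 2) := by
  obtain ⟨w, hw⟩ := hΔa
  set C : ℝ := ((Fintype.card V : ℝ) - 1 + Δ - δ) * Real.sqrt 2 with hC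
  have hΔR : ∀ v : V, deg G v ≤ (Δ : ℝ) := fun v => by
    unfold deg; exact_mod_cast hΔ v
  have hδR : ∀ v : V, (δ : ℝ) ≤ deg G v := fun v => by
    unfold deg; exact_mod_cast hδ v
  have hdeg0 : ∀ v : V, (0:ℝ) ≤ deg G v := fun v => by unfold deg; positivity
  have hcard : 1 ≤ Fintype.card V := Fintype.card_pos_iff.mpr ⟨w⟩
  have hdeg_le : ∀ v : V, deg G v ≤ (Fintype.card V : ℝ) - 1 := fun v => by
    unfold deg
    have h1 := Nat.le_sub_one_of_lt (G.degree_lt_card_verts v)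
    have h2 : (G.degree v : ℝ) ≤ ((Fintype.card V - 1 : ℕ) : ℝ) := by exact_mod_cast h1
    rwa [Nat.cast_sub hcard, Nat.cast_one] at h2
  have hδle : (δ : ℝ) ≤ (Fintype.card V : ℝ) - 1 := le_trans (hδR w) (hdeg_le w)
  have hΔδ : (δ : ℝ) ≤ (Δ : ℝ) := le_trans (hδR w) (hΔR w)
  have hcompl : ∀ v : V, deg Gᶜ v = (Fintype.card V : ℝ) - 1 - deg G v := by
    intro v
    have hc : 1 ≤ Fintype.card V := Fintype.card_pos_iff.mpr ⟨w⟩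
    have hle : G.degree v ≤ Fintype.card V - 1 :=
      Nat.le_sub_one_of_lt (G.degree_lt_card_verts v)
    simp only [deg, SimpleGraph.degree_compl]
    push_cast [Nat.cast_sub hle, Nat.cast_sub hc]
    ring
  have hadj : ∀ u v : V, Gᶜ.Adj u v ↔ u ≠ v ∧ ¬ G.Adj u v := by
    intro u v; rw [SimpleGraph.compl_adj]
  have hLHS : SO Gᶜ + SOc G = (1/2) * ∑ u : V, ∑ v : V,
      if u ≠ v ∧ ¬ G.Adj u v then
        Real.sqrt (deg Gᶜ u ^ 2 + deg Gᶜ v ^ 2) +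
          Real.sqrt (deg G u ^ 2 + deg G v ^ 2) else 0 := by
    rw [SO, SOc, ← mul_add, ← Finset.sum_add_distrib]
    congr 1
    refine Finset.sum_congr rfl fun u _ => ?_
    rw [← Finset.sum_add_distrib]
    refine Finset.sum_congr rfl fun v _ => ?_
    by_cases h : u ≠ v ∧ ¬ G.Adj u v
    · rw [if_pos ((hadj u v).mpr h), if_pos h, if_pos h]
    · rw [if_neg (fun hc => h ((hadj u v).mp hc)), if_neg h, if_neg h]; ring
  have hRHS : mbar G * ((Fintype.card V : ℝ) - 1 + Δ - δ) * Real.sqrt 2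
      = (1/2) * ∑ u : V, ∑ v : V, if u ≠ v ∧ ¬ G.Adj u v then C else 0 := by
    rw [mbar]
    have hite : ∀ u v : V, (if u ≠ v ∧ ¬ G.Adj u v then C else 0)
        = (if u ≠ v ∧ ¬ G.Adj u v then (1:ℝ) else 0) * C := by
      intro u v; by_cases h : u ≠ v ∧ ¬ G.Adj u v <;> simp [h]
    simp_rw [hite, ← Finset.sum_mul]
    rw [hC]; ring
  have hterm : ∀ u v : V,
      Real.sqrt (deg Gᶜ u ^ 2 + deg Gᶜ v ^ 2) +
        Real.sqrt (deg G u ^ 2 + deg G v ^ 2) ≤ C := by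
    intro u v
    have h1 : Real.sqrt (deg Gᶜ u ^ 2 + deg Gᶜ v ^ 2)
        ≤ ((Fintype.card V : ℝ) - 1 - δ) * Real.sqrt 2 := by
      refine sqrt_sq_add_sq_le ?_ ?_ ?_ ?_
      · rw [hcompl]; have := hdeg_le u; linarith
      · rw [hcompl]; have := hdeg_le v; linarith
      · rw [hcompl]; have := hδR u; linarith
      · rw [hcompl]; have := hδR v; linarith
    have h2 : Real.sqrt (deg G u ^ 2 + deg G v ^ 2) ≤ (Δ : ℝ) * Real.sqrt 2 :=
      sqrt_sq_add_sq_le (hdeg0 u) (hdeg0 v) (hΔR u) (hΔR v)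
    have h3 : ((Fintype.card V : ℝ) - 1 - δ) * Real.sqrt 2
        + (Δ : ℝ) * Real.sqrt 2 = C := by rw [hC]; ring
    linarith
  constructor
  · rw [hLHS, hRHS]
    gcongr with u _ v _
    by_cases h : u ≠ v ∧ ¬ G.Adj u v
    · simpa [h] using hterm u v
    · simp [h]
  · rintro ⟨r, hr⟩
    have hΔr : (Δ : ℝ) = (r : ℝ) := by exact_mod_cast (hw.symm.trans (hr w))
    obtain ⟨w', hw'⟩ := hδa
    have hδr : (δ : ℝ) = (r : ℝ) := by exact_mod_cast (hw'.symm.trans (hr w'))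
    have hr_le : (r : ℝ) ≤ (Fintype.card V : ℝ) - 1 := by
      have h1 := hdeg_le w
      have h2 : deg G w = (r : ℝ) := by unfold deg; exact_mod_cast congrArg Nat.cast (hr w)
      linarith
    rw [hLHS, hRHS]
    congr 1
    refine Finset.sum_congr rfl fun u _ => Finset.sum_congr rfl fun v _ => ?_
    by_cases h : u ≠ v ∧ ¬ G.Adj u v
    · rw [if_pos h, if_pos h]
      have hdu : deg G u = (r : ℝ) := by unfold deg; exact_mod_cast congrArg Nat.cast (hr u)
      have hdv : deg G v = (r : ℝ) := by unfold deg; exact_mod_cast congrArg Nat.cast (hr v)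
      rw [hcompl, hcompl, hdu, hdv,
        sqrt_sq_add_sq_self (by linarith : (0:ℝ) ≤ (Fintype.card V : ℝ) - 1 - (r:ℝ)),
        sqrt_sq_add_sq_self (by positivity : (0:ℝ) ≤ (r:ℝ)), hC, hΔr, hδr]
      ring
    · simp [h]
end

section
/- For any graph G, M̅₁(G) = M̅₁(Ḡ), i.e., the first Zagreb coindex of a graph equals that of its complement. -/
open Finset

open scoped Classical

variable {V : Type*}

lemma sum_ite_adj [Fintype V] (H : SimpleGraph V) (u : V) (c : ℝ) :
    ∑ v : V, (if H.Adj u v then c else 0) = c * deg H u := by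
  unfold deg
  rw [Finset.sum_ite, Finset.sum_const_zero, Finset.sum_const, add_zero, nsmul_eq_mul,
      mul_comm]
  congr 2
  simp [SimpleGraph.degree, SimpleGraph.neighborFinset_eq_filter,
    Finset.filter_congr_decidable]

lemma myIteCongr {c d : Prop} {i1 : Decidable c} {i2 : Decidable d} {a b : ℝ}
    (h : c ↔ d) : (@ite _ c i1 a b) = (@ite _ d i2 a b) := by
  by_cases hc : c
  · rw [if_pos hc, if_pos (h.mp hc)]
  · rw [if_neg hc, if_neg (fun hd => hc (h.mpr hd))]

lemma half_sum [Fintype V] (H : SimpleGraph V) (f : V → ℝ) :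
    (1/2) * ∑ u : V, ∑ v : V, (if H.Adj u v then f u + f v else 0)
      = ∑ u : V, f u * deg H u := by
  have hsplit : ∀ u v : V, (if H.Adj u v then f u + f v else 0)
      = (if H.Adj u v then f u else 0) + (if H.Adj u v then f v else 0) := by
    intro u v; split <;> simp
  have h1 : ∑ u : V, ∑ v : V, (if H.Adj u v then f u else 0)
      = ∑ u : V, f u * deg H u :=
    Finset.sum_congr rfl fun u _ => sum_ite_adj H u (f u)
  have h2 : ∑ u : V, ∑ v : V, (if H.Adj u v then f v else 0)
      = ∑ u : V, f u * deg H u := by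
    rw [Finset.sum_comm]
    refine Finset.sum_congr rfl fun v _ => ?_
    have : ∀ u : V, (if H.Adj u v then f v else 0) = (if H.Adj v u then f v else 0) := by
      intro u; exact if_congr (H.adj_comm u v) rfl rfl
    simp_rw [this]
    exact sum_ite_adj H v (f v)
  simp_rw [hsplit, Finset.sum_add_distrib]
  rw [h1, h2]; ring

theorem zagrebCoindex_compl [Fintype V] (G : SimpleGraph V) :
    M1c G = M1c Gᶜ := by
  have hG : M1c G = ∑ u : V, deg G u * deg Gᶜ u := by
    rw [← half_sum Gᶜ (deg G)]
    unfold M1c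
    congr 1
    refine Finset.sum_congr rfl fun u _ => Finset.sum_congr rfl fun v _ => ?_
    exact myIteCongr (SimpleGraph.compl_adj G u v).symm
  have hGc : M1c Gᶜ = ∑ u : V, deg Gᶜ u * deg G u := by
    rw [← half_sum G (deg Gᶜ)]
    unfold M1c
    congr 1
    refine Finset.sum_congr rfl fun u _ => Finset.sum_congr rfl fun v _ => ?_
    refine myIteCongr ?_
    constructor
    · rintro ⟨hne, hna⟩
      have := (SimpleGraph.compl_adj (Gᶜ) u v).mpr ⟨hne, hna⟩
      simpa using this
    · intro h
      exact ⟨h.ne, fun hc => hc.2 h⟩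
  rw [hG, hGc]
  exact Finset.sum_congr rfl fun u _ => mul_comm _ _
end

section
/- For any graph G, SO̅(G) ≤ √(m̅ · F̅(G)), where m̅ is the number of edges of the complement of G and F̅(G) is the forgotten coindex. Equality holds if G is regular. -/
open Finset

open scoped Classical

variable {V : Type*}

theorem somborCoindex_le_sqrt_forgotten [Fintype V] (G : SimpleGraph V) :
    SOc G ≤ Real.sqrt (mbar G * Fc G) ∧
    ((∃ r, G.IsRegularOfDegree r) → SOc G = Real.sqrt (mbar G * Fc G)) := by

  classical
  set P : V × V → Prop := fun p => p.1 ≠ p.2 ∧ ¬ G.Adj p.1 p.2 with hP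
  set T : Finset (V × V) := Finset.univ.filter P with hT
  have hrw : ∀ (f : V → V → ℝ),
      (∑ u : V, ∑ v : V, if u ≠ v ∧ ¬ G.Adj u v then f u v else 0)
        = ∑ p ∈ T, f p.1 p.2 := by
    intro f
    rw [hT, Finset.sum_filter, ← Fintype.sum_prod_type']
  have hS : SOc G = (1/2) * ∑ p ∈ T, Real.sqrt (deg G p.1 ^ 2 + deg G p.2 ^ 2) := by
    rw [SOc, hrw]
  have hF : Fc G = (1/2) * ∑ p ∈ T, (deg G p.1 ^ 2 + deg G p.2 ^ 2) := by
    rw [Fc, hrw]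
  have hm : mbar G = (1/2) * (T.card : ℝ) := by
    rw [mbar, hrw]; simp
  have hsq : ∀ p ∈ T, Real.sqrt (deg G p.1 ^ 2 + deg G p.2 ^ 2) ^ 2
      = deg G p.1 ^ 2 + deg G p.2 ^ 2 := by
    intro p _; exact Real.sq_sqrt (by positivity)
  have key : (∑ p ∈ T, Real.sqrt (deg G p.1 ^ 2 + deg G p.2 ^ 2)) ^ 2
      ≤ (T.card : ℝ) * ∑ p ∈ T, (deg G p.1 ^ 2 + deg G p.2 ^ 2) := by
    have := sq_sum_le_card_mul_sum_sq
      (s := T) (f := fun p => Real.sqrt (deg G p.1 ^ 2 + deg G p.2 ^ 2))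
    calc _ ≤ (T.card : ℝ) * ∑ p ∈ T, Real.sqrt (deg G p.1 ^ 2 + deg G p.2 ^ 2) ^ 2 := this
      _ = _ := by rw [Finset.sum_congr rfl hsq]
  have hSnn : 0 ≤ SOc G := by
    rw [hS]
    have : 0 ≤ ∑ p ∈ T, Real.sqrt (deg G p.1 ^ 2 + deg G p.2 ^ 2) :=
      Finset.sum_nonneg fun p _ => Real.sqrt_nonneg _
    linarith
  have hsq2 : SOc G ^ 2 ≤ mbar G * Fc G := by
    rw [hS, hF, hm]; nlinarith [key]
  constructor
  · rw [show SOc G = Real.sqrt (SOc G ^ 2) from (Real.sqrt_sq hSnn).symm]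
    exact Real.sqrt_le_sqrt hsq2
  · rintro ⟨r, hr⟩
    have hdeg : ∀ v : V, deg G v = (r : ℝ) := fun v => by
      simp [deg, hr v]
    have hd2 : ∀ p ∈ T, Real.sqrt (deg G p.1 ^ 2 + deg G p.2 ^ 2)
        = Real.sqrt (2 * (r : ℝ) ^ 2) := by
      intro p _; rw [hdeg, hdeg]; ring_nf
    have heq : mbar G * Fc G = SOc G ^ 2 := by
      rw [hS, hF, hm, Finset.sum_congr rfl hd2,
        Finset.sum_congr rfl (fun p _ => by rw [hdeg, hdeg])]
      rw [Finset.sum_const, Finset.sum_const, nsmul_eq_mul, nsmul_eq_mul]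
      have h2 : Real.sqrt (2 * (r : ℝ) ^ 2) ^ 2 = 2 * (r : ℝ) ^ 2 :=
        Real.sq_sqrt (by positivity)
      rw [mul_pow, mul_pow, h2]
      ring
    rw [heq, Real.sqrt_sq hSnn]
end

section
/- Let G be a graph with maximum degree Δ and minimum degree δ > 0. Then √(m̅ · F̅(G)) ≤ (1/2)·(δ/Δ + Δ/δ)·SO̅(G), where m̅ = |E(Ḡ)| and F̅(G) is the forgotten coindex. -/
open Finset

open scoped Classical

variable {V : Type*}

lemma polykey (d D T A B r : ℝ) (hd : 0 < d) (hD : 0 < D) (hr2 : r ^ 2 = 2)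
    (hT0 : 0 ≤ T) (hA0 : 0 ≤ A) (hB0 : 0 ≤ B)
    (hsum : B + 2 * d * D * T ≤ r * (d + D) * A) :
    4 * d ^ 2 * D ^ 2 * (T * B) ≤ (d ^ 2 + D ^ 2) ^ 2 * A ^ 2 := by
  have hint1 : 4 * d * D * T * (B + 2 * d * D * T) ≤ 4 * d * D * T * (r * (d + D) * A) :=
    mul_le_mul_of_nonneg_left hsum (by positivity)
  have hint2 := sq_nonneg (4 * d * D * T - r * (d + D) * A)
  have hint3 : r ^ 2 * ((d + D) * A) ^ 2 = 2 * ((d + D) * A) ^ 2 := by rw [hr2]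
  have h1 : 4 * d * D * (T * B) ≤ (d + D) ^ 2 * A ^ 2 := by nlinarith [hint1, hint2, hint3]
  have hq : 0 ≤ (d ^ 2 + D ^ 2) ^ 2 - (d * D) * (d + D) ^ 2 := by
    nlinarith [mul_nonneg (sq_nonneg (d - D)) (show (0:ℝ) ≤ d ^ 2 + D ^ 2 + d * D by positivity)]
  nlinarith [mul_le_mul_of_nonneg_left h1 (mul_pos hd hD).le, mul_nonneg hq (sq_nonneg A)]

theorem sqrt_forgotten_le_somborCoindex [Fintype V] (G : SimpleGraph V) (Δ δ : ℕ)
    (hδ0 : 0 < δ)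
    (hΔ : ∀ v, G.degree v ≤ Δ) (hΔa : ∃ v, G.degree v = Δ)
    (hδ : ∀ v, δ ≤ G.degree v) (hδa : ∃ v, G.degree v = δ) :
    Real.sqrt (mbar G * Fc G) ≤
      (1/2) * ((δ : ℝ) / Δ + (Δ : ℝ) / δ) * SOc G := by
  classical
  obtain ⟨v0, hv0⟩ := hΔa
  have hδΔ : δ ≤ Δ := hv0 ▸ hδ v0
  have hΔ0 : (0:ℝ) < Δ := by exact_mod_cast lt_of_lt_of_le hδ0 hδΔ
  have hd0 : (0:ℝ) < δ := by exact_mod_cast hδ0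
  set P : Finset (V × V) :=
    Finset.univ.filter (fun p : V × V => p.1 ≠ p.2 ∧ ¬ G.Adj p.1 p.2) with hPdef
  set s : V × V → ℝ := fun p => Real.sqrt (deg G p.1 ^ 2 + deg G p.2 ^ 2) with hsdef
  have hm : mbar G = (1/2) * (P.card : ℝ) := by
    rw [mbar, ← Finset.sum_product', Finset.univ_product_univ, ← Finset.sum_filter,
      ← hPdef, Finset.sum_const, nsmul_eq_mul, mul_one]
  have hF : Fc G = (1/2) * ∑ p ∈ P, (deg G p.1 ^ 2 + deg G p.2 ^ 2) := by
    rw [Fc, ← Finset.sum_product', Finset.univ_product_univ, ← Finset.sum_filter, ← hPdef]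
  have hS : SOc G = (1/2) * ∑ p ∈ P, s p := by
    rw [SOc, ← Finset.sum_product', Finset.univ_product_univ, ← Finset.sum_filter, ← hPdef]
  set T : ℝ := (P.card : ℝ) with hTdef
  set A : ℝ := ∑ p ∈ P, s p with hAdef
  set B : ℝ := ∑ p ∈ P, (deg G p.1 ^ 2 + deg G p.2 ^ 2) with hBdef
  set r : ℝ := Real.sqrt 2 with hrdef
  have hr2 : r ^ 2 = 2 := Real.sq_sqrt (by norm_num)
  have hr0 : 0 ≤ r := Real.sqrt_nonneg 2
  -- pointwise bounds
  have hpt : ∀ p : V × V, s p ^ 2 + 2 * δ * Δ ≤ r * ((δ:ℝ) + Δ) * s p := by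
    intro p
    have hd1l : (δ:ℝ) ≤ deg G p.1 := by
      simp only [deg]; exact_mod_cast hδ p.1
    have hd2l : (δ:ℝ) ≤ deg G p.2 := by
      simp only [deg]; exact_mod_cast hδ p.2
    have hd1u : deg G p.1 ≤ (Δ:ℝ) := by
      simp only [deg]; exact_mod_cast hΔ p.1
    have hd2u : deg G p.2 ≤ (Δ:ℝ) := by
      simp only [deg]; exact_mod_cast hΔ p.2
    have hd1n : (0:ℝ) ≤ deg G p.1 := le_trans hd0.le hd1l
    have hd2n : (0:ℝ) ≤ deg G p.2 := le_trans hd0.le hd2l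
    have hnn : (0:ℝ) ≤ deg G p.1 ^ 2 + deg G p.2 ^ 2 := by positivity
    have hs2 : s p ^ 2 = deg G p.1 ^ 2 + deg G p.2 ^ 2 := Real.sq_sqrt hnn
    have hs0 : 0 ≤ s p := Real.sqrt_nonneg _
    have e1 : (r * (δ:ℝ)) ^ 2 = 2 * (δ:ℝ)^2 := by rw [mul_pow, hr2]
    have e2 : (r * (Δ:ℝ)) ^ 2 = 2 * (Δ:ℝ)^2 := by rw [mul_pow, hr2]
    have hlow : r * δ ≤ s p := by
      rw [hsdef]
      refine (Real.le_sqrt (by positivity) hnn).mpr ?_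
      rw [e1]
      nlinarith [pow_le_pow_left₀ hd0.le hd1l 2, pow_le_pow_left₀ hd0.le hd2l 2]
    have hhigh : s p ≤ r * Δ := by
      have h1 : deg G p.1 ^ 2 + deg G p.2 ^ 2 ≤ (r * Δ) ^ 2 := by
        rw [e2]
        nlinarith [pow_le_pow_left₀ hd1n hd1u 2, pow_le_pow_left₀ hd2n hd2u 2]
      calc s p ≤ Real.sqrt ((r * Δ) ^ 2) := Real.sqrt_le_sqrt (hs2 ▸ h1)
        _ = r * Δ := Real.sqrt_sq (by positivity)
    have hfact : 0 ≤ (s p - r * δ) * (r * Δ - s p) :=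
      mul_nonneg (sub_nonneg.mpr hlow) (sub_nonneg.mpr hhigh)
    have e3 : r * (δ:ℝ) * (r * (Δ:ℝ)) = 2 * ((δ:ℝ) * Δ) := by
      rw [show r * (δ:ℝ) * (r * (Δ:ℝ)) = r^2 * ((δ:ℝ)*Δ) by ring, hr2]
    have hexp : (s p - r * (δ:ℝ)) * (r * (Δ:ℝ) - s p)
        = r * ((δ:ℝ) + Δ) * s p - s p ^ 2 - (r * (δ:ℝ) * (r * (Δ:ℝ))) := by ring
    rw [hexp, e3] at hfact
    linarith [hfact]
  have hsum : B + 2 * δ * Δ * T ≤ r * ((δ:ℝ) + Δ) * A := by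
    have h1 : ∑ p ∈ P, (s p ^ 2 + 2 * δ * Δ) ≤ ∑ p ∈ P, r * ((δ:ℝ) + Δ) * s p :=
      Finset.sum_le_sum fun p _ => hpt p
    have h2 : ∑ p ∈ P, (s p ^ 2 + 2 * (δ:ℝ) * Δ) = B + 2 * δ * Δ * T := by
      rw [Finset.sum_add_distrib, Finset.sum_const, nsmul_eq_mul, hBdef]
      congr 1
      · exact Finset.sum_congr rfl fun p _ => Real.sq_sqrt (by positivity)
      · rw [hTdef]; ring
    rw [h2, ← Finset.mul_sum, ← hAdef] at h1
    exact h1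
  have hT0 : 0 ≤ T := by rw [hTdef]; positivity
  have hA0 : 0 ≤ A := Finset.sum_nonneg fun p _ => Real.sqrt_nonneg _
  have hB0 : 0 ≤ B := Finset.sum_nonneg fun p _ => by positivity
  clear_value T A B r
  clear hTdef hAdef hBdef hrdef hsdef hpt
  -- main polynomial inequality
  have hkey : 4 * (δ:ℝ)^2 * Δ^2 * (T * B) ≤ ((δ:ℝ)^2 + Δ^2)^2 * A^2 := by
    have := polykey (δ:ℝ) (Δ:ℝ) T A B r hd0 hΔ0 hr2 hT0 hA0 hB0 hsum
    linarith [this]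
  have hmain : mbar G * Fc G ≤ ((1/2) * ((δ : ℝ) / Δ + (Δ : ℝ) / δ) * SOc G)^2 := by
    rw [hm, hF, hS]
    have hC : (1/2:ℝ) * ((δ : ℝ) / Δ + (Δ : ℝ) / δ) * ((1/2) * A)
        = (((δ:ℝ)^2 + Δ^2) * A) / (4 * ((δ:ℝ) * Δ)) := by
      field_simp; ring
    rw [hC, div_pow, le_div_iff₀ (by positivity)]
    linarith [hkey]
  have hR0 : 0 ≤ (1/2) * ((δ : ℝ) / Δ + (Δ : ℝ) / δ) * SOc G := by
    rw [hS]; positivity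
  calc Real.sqrt (mbar G * Fc G)
      ≤ Real.sqrt (((1/2) * ((δ : ℝ) / Δ + (Δ : ℝ) / δ) * SOc G)^2) :=
        Real.sqrt_le_sqrt hmain
    _ = _ := Real.sqrt_sq hR0
end

section
/- Let G be a graph with maximum degree Δ and minimum degree δ > 0. Then 2·√(m̅ · Δ · M̅₁(G)) ≤ (1 + Δ/δ)·SO̅(G), where m̅ = |E(Ḡ)| and M̅₁ is the first Zagreb coindex. -/
open Finset

open scoped Classical

variable {V : Type*}

theorem sqrt_zagrebCoindex_le_somborCoindex [Fintype V] (G : SimpleGraph V) (Δ δ : ℕ)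
    (hδ0 : 0 < δ)
    (hΔ : ∀ v, G.degree v ≤ Δ) (hΔa : ∃ v, G.degree v = Δ)
    (hδ : ∀ v, δ ≤ G.degree v) (hδa : ∃ v, G.degree v = δ) :
    2 * Real.sqrt (mbar G * Δ * M1c G) ≤ (1 + (Δ : ℝ) / δ) * SOc G := by
  have hd : (0:ℝ) < (δ:ℝ) := by exact_mod_cast hδ0
  have hD0 : (0:ℝ) ≤ (Δ:ℝ) := by positivity
  have hdegδ : ∀ v, (δ:ℝ) ≤ deg G v := by
    intro v; unfold deg; exact_mod_cast hδ v
  have hdeg0 : ∀ v, (0:ℝ) ≤ deg G v := fun v => le_trans hd.le (hdegδ v)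
  have hS0 : 0 ≤ SOc G := by
    unfold SOc
    apply mul_nonneg (by norm_num)
    apply Finset.sum_nonneg; intro u _
    apply Finset.sum_nonneg; intro v _
    split_ifs <;> positivity
  have hm0 : 0 ≤ mbar G := by
    unfold mbar
    apply mul_nonneg (by norm_num)
    apply Finset.sum_nonneg; intro u _
    apply Finset.sum_nonneg; intro v _
    split_ifs <;> norm_num
  have hM0 : 0 ≤ M1c G := by
    unfold M1c
    apply mul_nonneg (by norm_num)
    apply Finset.sum_nonneg; intro u _
    apply Finset.sum_nonneg; intro v _
    split_ifs with h
    · have := hdeg0 u; have := hdeg0 v; linarith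
    · exact le_refl _
  -- √2·δ·m̄ ≤ SOc
  have h1 : Real.sqrt 2 * (δ:ℝ) * mbar G ≤ SOc G := by
    unfold mbar SOc
    rw [show Real.sqrt 2 * (δ:ℝ) * ((1/2) * ∑ u : V, ∑ v : V,
        if u ≠ v ∧ ¬ G.Adj u v then (1 : ℝ) else 0)
      = (1/2) * ∑ u : V, ∑ v : V, (Real.sqrt 2 * (δ:ℝ)) *
        (if u ≠ v ∧ ¬ G.Adj u v then (1 : ℝ) else 0) by
        rw [mul_left_comm]; congr 1; rw [Finset.mul_sum]
        exact Finset.sum_congr rfl fun u _ => by rw [Finset.mul_sum]]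
    apply mul_le_mul_of_nonneg_left _ (by norm_num)
    apply Finset.sum_le_sum; intro u _
    apply Finset.sum_le_sum; intro v _
    by_cases h : u ≠ v ∧ ¬ G.Adj u v
    · rw [if_pos h, if_pos h, mul_one]
      have h2δ : Real.sqrt 2 * (δ:ℝ) = Real.sqrt (2 * (δ:ℝ)^2) := by
        rw [Real.sqrt_mul (by norm_num), Real.sqrt_sq hd.le]
      rw [h2δ]
      apply Real.sqrt_le_sqrt
      have hu := hdegδ u; have hv := hdegδ v
      nlinarith
    · simp [h]
  -- M1c ≤ √2 · SOc
  have h2 : M1c G ≤ Real.sqrt 2 * SOc G := by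
    unfold M1c SOc
    rw [show Real.sqrt 2 * ((1/2) * ∑ u : V, ∑ v : V,
        if u ≠ v ∧ ¬ G.Adj u v then Real.sqrt (deg G u ^ 2 + deg G v ^ 2) else 0)
      = (1/2) * ∑ u : V, ∑ v : V, Real.sqrt 2 *
        (if u ≠ v ∧ ¬ G.Adj u v then Real.sqrt (deg G u ^ 2 + deg G v ^ 2) else 0) by
        rw [mul_left_comm]; congr 1; rw [Finset.mul_sum]
        exact Finset.sum_congr rfl fun u _ => by rw [Finset.mul_sum]]
    apply mul_le_mul_of_nonneg_left _ (by norm_num)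
    apply Finset.sum_le_sum; intro u _
    apply Finset.sum_le_sum; intro v _
    by_cases h : u ≠ v ∧ ¬ G.Adj u v
    · rw [if_pos h, if_pos h]
      have hu := hdeg0 u; have hv := hdeg0 v
      have heq : Real.sqrt 2 * Real.sqrt (deg G u ^ 2 + deg G v ^ 2)
          = Real.sqrt (2 * (deg G u ^ 2 + deg G v ^ 2)) := by
        rw [Real.sqrt_mul (by norm_num)]
      rw [heq]
      have hab : deg G u + deg G v = Real.sqrt ((deg G u + deg G v)^2) := by
        rw [Real.sqrt_sq (by linarith)]
      rw [hab]
      apply Real.sqrt_le_sqrt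
      nlinarith [sq_nonneg (deg G u - deg G v)]
    · simp [h]
  have hs2 : (0:ℝ) < Real.sqrt 2 := by positivity
  have hprod : (Real.sqrt 2 * (δ:ℝ) * mbar G) * M1c G ≤ SOc G * (Real.sqrt 2 * SOc G) :=
    mul_le_mul h1 h2 hM0 hS0
  have h4 : (δ:ℝ) * (mbar G * M1c G) ≤ SOc G ^ 2 := by
    have h3 : Real.sqrt 2 * ((δ:ℝ) * (mbar G * M1c G)) ≤ Real.sqrt 2 * (SOc G ^ 2) := by
      nlinarith [hprod]
    exact le_of_mul_le_mul_left h3 hs2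
  have h5 : mbar G * (Δ:ℝ) * M1c G ≤ (Δ:ℝ) / (δ:ℝ) * SOc G ^ 2 := by
    rw [div_mul_eq_mul_div, le_div_iff₀ hd]
    nlinarith [mul_le_mul_of_nonneg_left h4 hD0]
  have hx0 : (0:ℝ) ≤ (Δ:ℝ) / (δ:ℝ) := div_nonneg hD0 hd.le
  calc 2 * Real.sqrt (mbar G * Δ * M1c G)
      ≤ 2 * Real.sqrt ((Δ:ℝ) / (δ:ℝ) * SOc G ^ 2) := by
        apply mul_le_mul_of_nonneg_left (Real.sqrt_le_sqrt h5) (by norm_num)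
    _ = 2 * (Real.sqrt ((Δ:ℝ) / (δ:ℝ)) * SOc G) := by
        rw [Real.sqrt_mul hx0, Real.sqrt_sq hS0]
    _ ≤ (1 + (Δ:ℝ) / (δ:ℝ)) * SOc G := by
        nlinarith [sq_nonneg (Real.sqrt ((Δ:ℝ)/(δ:ℝ)) - 1),
          Real.sq_sqrt hx0, Real.sqrt_nonneg ((Δ:ℝ)/(δ:ℝ)), hS0]
end

section
/- Let G be a graph with maximum degree Δ and minimum degree δ > 0. Then SO̅(G) ≤ √((δ/Δ + Δ/δ) · m̅ · M̅₂(G)), where m̅ = |E(Ḡ)| and M̅₂ is the second Zagreb coindex. Equality holds if G is regular. -/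
open Finset

open scoped Classical

variable {V : Type*}

theorem somborCoindex_le_sqrt_zagreb2 [Fintype V] (G : SimpleGraph V) (Δ δ : ℕ)
    (hδ0 : 0 < δ)
    (hΔ : ∀ v, G.degree v ≤ Δ) (hΔa : ∃ v, G.degree v = Δ)
    (hδ : ∀ v, δ ≤ G.degree v) (hδa : ∃ v, G.degree v = δ) :
    SOc G ≤ Real.sqrt (((δ : ℝ) / Δ + (Δ : ℝ) / δ) * mbar G * M2c G) ∧
    ((∃ r, G.IsRegularOfDegree r) →
      SOc G = Real.sqrt (((δ : ℝ) / Δ + (Δ : ℝ) / δ) * mbar G * M2c G)) := by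
  classical
  set c : ℝ := (δ : ℝ) / Δ + (Δ : ℝ) / δ with hc
  set s : Finset (V × V) :=
    Finset.univ.filter (fun p : V × V => p.1 ≠ p.2 ∧ ¬ G.Adj p.1 p.2) with hsdef
  -- rewrite double sums as sums over s
  have hsum : ∀ f : V → V → ℝ,
      (∑ u : V, ∑ v : V, if u ≠ v ∧ ¬ G.Adj u v then f u v else 0)
        = ∑ p ∈ s, f p.1 p.2 := by
    intro f
    rw [hsdef, Finset.sum_filter, ← Finset.univ_product_univ, Finset.sum_product]
  have hSOc : SOc G = (1/2) * ∑ p ∈ s,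
      Real.sqrt (deg G p.1 ^ 2 + deg G p.2 ^ 2) := by
    rw [SOc, hsum]
  have hM2c : M2c G = (1/2) * ∑ p ∈ s, deg G p.1 * deg G p.2 := by
    rw [M2c, hsum]
  have hmbar : mbar G = (1/2) * (s.card : ℝ) := by
    rw [mbar, hsum]; simp
  -- degree bounds
  have hdδ : ∀ v, (δ : ℝ) ≤ deg G v := fun v => by
    simp only [deg]; exact_mod_cast (hδ v)
  have hdΔ : ∀ v, deg G v ≤ (Δ : ℝ) := fun v => by
    simp only [deg]; exact_mod_cast (hΔ v)
  have hδr : (0 : ℝ) < δ := by exact_mod_cast hδ0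
  have hΔr : (0 : ℝ) < Δ := by
    obtain ⟨v, hv⟩ := hΔa
    have := hδ v
    have : 0 < Δ := lt_of_lt_of_le hδ0 (hv ▸ this)
    exact_mod_cast this
  have hc0 : 0 ≤ c := by positivity
  -- pointwise bound
  have hpt : ∀ p : V × V, deg G p.1 ^ 2 + deg G p.2 ^ 2 ≤ c * (deg G p.1 * deg G p.2) := by
    intro p
    have h1 := hdδ p.1; have h2 := hdδ p.2
    have h3 := hdΔ p.1; have h4 := hdΔ p.2
    have f1 : 0 ≤ (Δ : ℝ) * deg G p.1 - δ * deg G p.2 := by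
      nlinarith [mul_nonneg hΔr.le (sub_nonneg.2 h1), mul_nonneg hδr.le (sub_nonneg.2 h4)]
    have f2 : 0 ≤ (Δ : ℝ) * deg G p.2 - δ * deg G p.1 := by
      nlinarith [mul_nonneg hΔr.le (sub_nonneg.2 h2), mul_nonneg hδr.le (sub_nonneg.2 h3)]
    have key := mul_nonneg f1 f2
    rw [hc, div_add_div _ _ (ne_of_gt hΔr) (ne_of_gt hδr), div_mul_eq_mul_div,
      le_div_iff₀ (by positivity)]
    nlinarith
  have hdd0 : ∀ p : V × V, 0 ≤ deg G p.1 * deg G p.2 := by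
    intro p
    have := hdδ p.1; have := hdδ p.2
    nlinarith
  -- main Cauchy-Schwarz bound
  have hmain : ∑ p ∈ s, Real.sqrt (deg G p.1 ^ 2 + deg G p.2 ^ 2)
      ≤ Real.sqrt ((s.card : ℝ) * ∑ p ∈ s, c * (deg G p.1 * deg G p.2)) := by
    calc ∑ p ∈ s, Real.sqrt (deg G p.1 ^ 2 + deg G p.2 ^ 2)
        ≤ ∑ p ∈ s, Real.sqrt (c * (deg G p.1 * deg G p.2)) := by
          apply Finset.sum_le_sum
          intro p _
          exact Real.sqrt_le_sqrt (hpt p)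
      _ ≤ Real.sqrt ((s.card : ℝ) * ∑ p ∈ s, c * (deg G p.1 * deg G p.2)) := by
          apply Real.le_sqrt_of_sq_le
          calc (∑ p ∈ s, Real.sqrt (c * (deg G p.1 * deg G p.2))) ^ 2
              ≤ (s.card : ℝ) * ∑ p ∈ s, Real.sqrt (c * (deg G p.1 * deg G p.2)) ^ 2 :=
                sq_sum_le_card_mul_sum_sq
            _ = (s.card : ℝ) * ∑ p ∈ s, c * (deg G p.1 * deg G p.2) := by
                congr 1
                apply Finset.sum_congr rfl
                intro p _
                exact Real.sq_sqrt (by have := hdd0 p; positivity)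
  -- identify RHS
  have hRHS : c * mbar G * M2c G
      = (1/2)^2 * ((s.card : ℝ) * ∑ p ∈ s, c * (deg G p.1 * deg G p.2)) := by
    rw [hmbar, hM2c, ← Finset.mul_sum]
    ring
  have hRHS' : Real.sqrt (c * mbar G * M2c G)
      = (1/2) * Real.sqrt ((s.card : ℝ) * ∑ p ∈ s, c * (deg G p.1 * deg G p.2)) := by
    rw [hRHS, Real.sqrt_mul (by positivity), Real.sqrt_sq (by norm_num)]
  constructor
  · rw [hSOc, hRHS']
    have h2 : (0:ℝ) < 1/2 := by norm_num
    exact mul_le_mul_of_nonneg_left hmain (le_of_lt h2)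
  · rintro ⟨r, hr⟩
    have hdeg : ∀ v, deg G v = (r : ℝ) := fun v => by
      simp [deg, hr v]
    have hΔr' : (Δ : ℝ) = (r : ℝ) := by
      obtain ⟨v, hv⟩ := hΔa
      rw [← hdeg v, deg, hv]
    have hδr' : (δ : ℝ) = (r : ℝ) := by
      obtain ⟨v, hv⟩ := hδa
      rw [← hdeg v, deg, hv]
    have hr0 : (0 : ℝ) < (r : ℝ) := hδr' ▸ hδr
    have hc2 : c = 2 := by
      rw [hc, hΔr', hδr', div_self (ne_of_gt hr0)]; norm_num
    have hterm : ∀ p : V × V, Real.sqrt (deg G p.1 ^ 2 + deg G p.2 ^ 2)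
        = (r : ℝ) * Real.sqrt 2 := by
      intro p
      rw [hdeg p.1, hdeg p.2]
      have h22 : (r:ℝ)^2 + (r:ℝ)^2 = ((r:ℝ) * Real.sqrt 2)^2 := by
        rw [mul_pow, Real.sq_sqrt (by norm_num : (0:ℝ) ≤ 2)]; ring
      rw [h22, Real.sqrt_sq (by positivity)]
    have hLHS : SOc G = (1/2) * ((s.card : ℝ) * ((r : ℝ) * Real.sqrt 2)) := by
      rw [hSOc, Finset.sum_congr rfl (fun p _ => hterm p), Finset.sum_const, nsmul_eq_mul]
    rw [hLHS, hRHS']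
    congr 1
    have : (s.card : ℝ) * ∑ p ∈ s, c * (deg G p.1 * deg G p.2)
        = ((s.card : ℝ) * ((r:ℝ) * Real.sqrt 2))^2 := by
      rw [Finset.sum_congr rfl (fun p _ => by rw [hdeg p.1, hdeg p.2, hc2]),
        Finset.sum_const, nsmul_eq_mul]
      have h2 : Real.sqrt 2 ^ 2 = 2 := Real.sq_sqrt (by norm_num)
      nlinarith [h2]
    rw [this, Real.sqrt_sq (by positivity)]
end

section
/- Let G₁ and G₂ be graphs on disjoint vertex sets with n₁ and n₂ vertices, maximum degrees Δ₁, Δ₂ and minimum degrees δ₁, δ₂. Then SO̅(G₁) + SO̅(G₂) + n₁n₂√(δ₁²+δ₂²) ≤ SO̅(G₁ ∪ G₂) ≤ SO̅(G₁) + SO̅(G₂) + n₁n₂√(Δ₁²+Δ₂²), with equality if both G₁ and G₂ are regular. -/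
open Finset

open scoped Classical

variable {V : Type*}

section Aux
variable {V₁ V₂ : Type*} [Fintype V₁] [Fintype V₂]

lemma deg_sum_inl (G₁ : SimpleGraph V₁) (G₂ : SimpleGraph V₂) (u : V₁) :
    deg (G₁ ⊕g G₂) (Sum.inl u) = deg G₁ u := by
  unfold deg; norm_cast
  rw [SimpleGraph.degree, SimpleGraph.degree, SimpleGraph.neighborFinset_eq_filter,
    SimpleGraph.neighborFinset_eq_filter, Finset.card_filter, Finset.card_filter,
    Fintype.sum_sum_type]
  simp

lemma deg_sum_inr (G₁ : SimpleGraph V₁) (G₂ : SimpleGraph V₂) (u : V₂) :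
    deg (G₁ ⊕g G₂) (Sum.inr u) = deg G₂ u := by
  unfold deg; norm_cast
  rw [SimpleGraph.degree, SimpleGraph.degree, SimpleGraph.neighborFinset_eq_filter,
    SimpleGraph.neighborFinset_eq_filter, Finset.card_filter, Finset.card_filter,
    Fintype.sum_sum_type]
  simp

lemma SOc_sum (G₁ : SimpleGraph V₁) (G₂ : SimpleGraph V₂) :
    SOc (G₁ ⊕g G₂) = SOc G₁ + SOc G₂ +
    ∑ u : V₁, ∑ v : V₂, Real.sqrt (deg G₁ u ^ 2 + deg G₂ v ^ 2) := by
  unfold SOc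
  simp only [Fintype.sum_sum_type, deg_sum_inl, deg_sum_inr, SimpleGraph.sum_adj]
  simp only [ne_eq, Sum.inl.injEq, Sum.inr.injEq, reduceCtorEq]
  simp only [not_false_eq_true, and_true, true_and, if_true, ite_not, Finset.sum_add_distrib]
  have h : (∑ x : V₂, ∑ y : V₁, Real.sqrt (deg G₂ x ^ 2 + deg G₁ y ^ 2)) =
      ∑ x : V₁, ∑ y : V₂, Real.sqrt (deg G₁ x ^ 2 + deg G₂ y ^ 2) := by
    rw [Finset.sum_comm]
    simp [add_comm]
  rw [h]; ring

end Aux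

theorem somborCoindex_sum_bounds {V₁ V₂ : Type*} [Fintype V₁] [Fintype V₂]
    (G₁ : SimpleGraph V₁) (G₂ : SimpleGraph V₂) (Δ₁ δ₁ Δ₂ δ₂ : ℕ)
    (hΔ₁ : ∀ v, G₁.degree v ≤ Δ₁) (hΔ₁a : ∃ v, G₁.degree v = Δ₁)
    (hδ₁ : ∀ v, δ₁ ≤ G₁.degree v) (hδ₁a : ∃ v, G₁.degree v = δ₁)
    (hΔ₂ : ∀ v, G₂.degree v ≤ Δ₂) (hΔ₂a : ∃ v, G₂.degree v = Δ₂)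
    (hδ₂ : ∀ v, δ₂ ≤ G₂.degree v) (hδ₂a : ∃ v, G₂.degree v = δ₂) :
    SOc G₁ + SOc G₂ + (Fintype.card V₁ : ℝ) * (Fintype.card V₂ : ℝ) *
        Real.sqrt ((δ₁ : ℝ) ^ 2 + (δ₂ : ℝ) ^ 2) ≤ SOc (G₁ ⊕g G₂) ∧
    SOc (G₁ ⊕g G₂) ≤ SOc G₁ + SOc G₂ + (Fintype.card V₁ : ℝ) * (Fintype.card V₂ : ℝ) *
        Real.sqrt ((Δ₁ : ℝ) ^ 2 + (Δ₂ : ℝ) ^ 2) ∧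
    ((∃ r, G₁.IsRegularOfDegree r) → (∃ r, G₂.IsRegularOfDegree r) →
      (SOc G₁ + SOc G₂ + (Fintype.card V₁ : ℝ) * (Fintype.card V₂ : ℝ) *
          Real.sqrt ((δ₁ : ℝ) ^ 2 + (δ₂ : ℝ) ^ 2) = SOc (G₁ ⊕g G₂) ∧
        SOc (G₁ ⊕g G₂) = SOc G₁ + SOc G₂ + (Fintype.card V₁ : ℝ) * (Fintype.card V₂ : ℝ) *
          Real.sqrt ((Δ₁ : ℝ) ^ 2 + (Δ₂ : ℝ) ^ 2))) := by
  rw [SOc_sum]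
  have hd1l : ∀ u, (δ₁ : ℝ) ≤ deg G₁ u := fun u => by
    unfold deg; exact_mod_cast hδ₁ u
  have hd1u : ∀ u, deg G₁ u ≤ (Δ₁ : ℝ) := fun u => by
    unfold deg; exact_mod_cast hΔ₁ u
  have hd2l : ∀ u, (δ₂ : ℝ) ≤ deg G₂ u := fun u => by
    unfold deg; exact_mod_cast hδ₂ u
  have hd2u : ∀ u, deg G₂ u ≤ (Δ₂ : ℝ) := fun u => by
    unfold deg; exact_mod_cast hΔ₂ u
  have hdeg_nonneg1 : ∀ u, (0:ℝ) ≤ deg G₁ u := fun u => by unfold deg; positivity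
  have hdeg_nonneg2 : ∀ u, (0:ℝ) ≤ deg G₂ u := fun u => by unfold deg; positivity
  have hlow : (Fintype.card V₁ : ℝ) * (Fintype.card V₂ : ℝ) *
      Real.sqrt ((δ₁ : ℝ) ^ 2 + (δ₂ : ℝ) ^ 2) ≤
      ∑ u : V₁, ∑ v : V₂, Real.sqrt (deg G₁ u ^ 2 + deg G₂ v ^ 2) := by
    calc (Fintype.card V₁ : ℝ) * (Fintype.card V₂ : ℝ) *
        Real.sqrt ((δ₁ : ℝ) ^ 2 + (δ₂ : ℝ) ^ 2)
        = ∑ _u : V₁, ∑ _v : V₂, Real.sqrt ((δ₁ : ℝ) ^ 2 + (δ₂ : ℝ) ^ 2) := by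
          simp [Finset.sum_const, mul_assoc]
      _ ≤ _ := by
          refine Finset.sum_le_sum fun u _ => Finset.sum_le_sum fun v _ => ?_
          exact Real.sqrt_le_sqrt (add_le_add
            (pow_le_pow_left₀ (by positivity) (hd1l u) 2)
            (pow_le_pow_left₀ (by positivity) (hd2l v) 2))
  have hhigh : (∑ u : V₁, ∑ v : V₂, Real.sqrt (deg G₁ u ^ 2 + deg G₂ v ^ 2)) ≤
      (Fintype.card V₁ : ℝ) * (Fintype.card V₂ : ℝ) *
      Real.sqrt ((Δ₁ : ℝ) ^ 2 + (Δ₂ : ℝ) ^ 2) := by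
    calc (∑ u : V₁, ∑ v : V₂, Real.sqrt (deg G₁ u ^ 2 + deg G₂ v ^ 2))
        ≤ ∑ _u : V₁, ∑ _v : V₂, Real.sqrt ((Δ₁ : ℝ) ^ 2 + (Δ₂ : ℝ) ^ 2) := by
          refine Finset.sum_le_sum fun u _ => Finset.sum_le_sum fun v _ => ?_
          exact Real.sqrt_le_sqrt (add_le_add
            (pow_le_pow_left₀ (hdeg_nonneg1 u) (hd1u u) 2)
            (pow_le_pow_left₀ (hdeg_nonneg2 v) (hd2u v) 2))
      _ = _ := by simp [Finset.sum_const, mul_assoc]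
  refine ⟨by linarith, by linarith, ?_⟩
  rintro ⟨r₁, hr₁⟩ ⟨r₂, hr₂⟩
  obtain ⟨v₁, hv₁⟩ := hδ₁a
  obtain ⟨w₁, hw₁⟩ := hΔ₁a
  obtain ⟨v₂, hv₂⟩ := hδ₂a
  obtain ⟨w₂, hw₂⟩ := hΔ₂a
  have e1 : δ₁ = r₁ := by rw [← hv₁, hr₁ v₁]
  have e2 : Δ₁ = r₁ := by rw [← hw₁, hr₁ w₁]
  have e3 : δ₂ = r₂ := by rw [← hv₂, hr₂ v₂]
  have e4 : Δ₂ = r₂ := by rw [← hw₂, hr₂ w₂]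
  have hc : (∑ u : V₁, ∑ v : V₂, Real.sqrt (deg G₁ u ^ 2 + deg G₂ v ^ 2)) =
      (Fintype.card V₁ : ℝ) * (Fintype.card V₂ : ℝ) *
      Real.sqrt ((r₁ : ℝ) ^ 2 + (r₂ : ℝ) ^ 2) := by
    have : ∀ (u : V₁) (v : V₂), Real.sqrt (deg G₁ u ^ 2 + deg G₂ v ^ 2) =
        Real.sqrt ((r₁ : ℝ) ^ 2 + (r₂ : ℝ) ^ 2) := by
      intro u v
      unfold deg
      rw [hr₁ u, hr₂ v]
    simp only [this, Finset.sum_const, Finset.card_univ, nsmul_eq_mul, mul_assoc]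
  subst e1 e2 e3 e4
  constructor <;> linarith
end
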